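/- Let X = (γ^X, β^X), Y = (γ^Y, β^Y) and Y' = (γ^{Y'}, β^{Y'}) be LR-pairs with |β^Y| = |β^{Y'}| and |γ^Y| = |γ^{Y'}|. If Y ⊴ Y' in the dominance order, then Y*X ⊴ Y'*X in the dominance order. -/
import Mathlib


open Module

namespace LRGE

/-! ### Partitions and combinatorics of LR-pairs -/

/-- `f : ℕ → ℕ` is a partition: weakly decreasing with finitely many nonzero parts.
Part `i+1` of the partition is `f i` (0-indexed). -/
def IsPartition (f : ℕ → ℕ) : Prop := Antitone f ∧ ∃ N, ∀ n, N ≤ n → f n = 0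

/-- Sum of the first `k` parts of `f`, i.e. `Σ_{i=1}^k f_i`. -/
def psum (f : ℕ → ℕ) (k : ℕ) : ℕ := ∑ i ∈ Finset.range k, f i

/-- The number of (nonzero) parts of a partition. -/
noncomputable def numParts (f : ℕ → ℕ) : ℕ := Set.ncard {i | f i ≠ 0}

/-- `n(λ) = Σ_i (i-1) λ_i` (with 1-indexed parts; here `f i` is part `i+1`). -/
noncomputable def nstat (f : ℕ → ℕ) : ℕ := ∑ᶠ i, i * f i

/-- The partial sums of the β-partition of the generic extension `Y * X`,
where `X` has pair `(γX, βX)` and `Y` has pair `(γY, βY)`: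
`Σ_{i=1}^k δ_i = Σ_{i=1}^k (βX_i + γY_i) + min (max (0, k - ℓ)) (Σ_{i=1}^k (βY_i - γY_i))`. -/
noncomputable def gbsum (βX γY βY : ℕ → ℕ) (k : ℕ) : ℕ :=
  (psum βX k + psum γY k) + min (k - numParts βX) (∑ i ∈ Finset.range k, (βY i - γY i))

/-- The parts of the β-partition of the generic extension `Y * X`. -/
noncomputable def geBeta (βX γY βY : ℕ → ℕ) : ℕ → ℕ :=
  fun i => gbsum βX γY βY (i + 1) - gbsum βX γY βY i

/-- An LR-pair `(γ, β)`: both partitions and `γ_i ≤ β_i ≤ γ_i + 1` for all `i`. -/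
def IsLRPair (γ β : ℕ → ℕ) : Prop :=
  IsPartition γ ∧ IsPartition β ∧ ∀ i, γ i ≤ β i ∧ β i ≤ γ i + 1

/-- the generic extension product on pairs `(γ, β)`: `gext Y X = Y * X`. -/
noncomputable def gext (Y X : (ℕ → ℕ) × (ℕ → ℕ)) : (ℕ → ℕ) × (ℕ → ℕ) :=
  (fun i => X.1 i + Y.1 i, geBeta X.2 Y.1 Y.2)

/-- The empty LR-pair (the class of the zero object). -/
def punit : (ℕ → ℕ) × (ℕ → ℕ) := (fun _ => 0, fun _ => 0)

/-- `m`-fold iterated generic extension product of a pair with itself. -/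
noncomputable def gpow (p : (ℕ → ℕ) × (ℕ → ℕ)) : ℕ → (ℕ → ℕ) × (ℕ → ℕ)
  | 0 => punit
  | 1 => p
  | n + 2 => gext p (gpow p (n + 1))

/-- The partition `(1^n)`. -/
def ones (n : ℕ) : ℕ → ℕ := fun i => if i < n then 1 else 0

/-- The partition with a single part `m` (empty if `m = 0`). -/
def single (m : ℕ) : ℕ → ℕ := fun i => if i = 0 then m else 0

/-- The LR-pair of the picket `P_1^1`, namely `(∅, (1))`. -/
def p11 : (ℕ → ℕ) × (ℕ → ℕ) := (fun _ => 0, single 1)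

/-- The LR-pair of the picket `P_0^1`, namely `((1), (1))`. -/
def p01 : (ℕ → ℕ) × (ℕ → ℕ) := (single 1, single 1)

/-- The dominance order on pairs of partitions: `P ⊴ Q` iff all partial sums of `P`
are at least those of `Q` (both for the γ- and the β-partitions). -/
def domLE (P Q : (ℕ → ℕ) × (ℕ → ℕ)) : Prop :=
  ∀ k, 1 ≤ k → psum Q.1 k ≤ psum P.1 k ∧ psum Q.2 k ≤ psum P.2 k

/-- The partition (as a function `ℕ → ℕ`, parts in weakly decreasing order) whose
multiset of parts is the given multiset. -/
noncomputable def partOf (M : Multiset ℕ) : ℕ → ℕ :=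
  fun i => ((M.sort (· ≤ ·)).reverse.getD i 0)

/-! ### Nilpotent linear operators and the category `S` -/

variable (K : Type) [Field K]

/-- The nilpotent `K[T]`-module `N_λ`. -/
abbrev NMod (lam : ℕ → ℕ) : Type := ∀ i : ℕ, Fin (lam i) → K

/-- Multiplication by `T` on `N_λ`. -/
def shiftMap (lam : ℕ → ℕ) : NMod K lam →ₗ[K] NMod K lam where
  toFun v := fun i j => if h : (j : ℕ) + 1 < lam i then v i ⟨(j : ℕ) + 1, h⟩ else 0
  map_add' u v := by
    funext i j
    by_cases h : (j : ℕ) + 1 < lam i <;> simp [h]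
  map_smul' c v := by
    funext i j
    by_cases h : (j : ℕ) + 1 < lam i <;> simp [h]

/-- Multiplication by `T` on the single Jordan block `N_(m)`, realized on `Fin m → K`. -/
def sh (m : ℕ) : (Fin m → K) →ₗ[K] (Fin m → K) where
  toFun v := fun j => if h : (j : ℕ) + 1 < m then v ⟨(j : ℕ) + 1, h⟩ else 0
  map_add' u v := by
    funext j
    by_cases h : (j : ℕ) + 1 < m <;> simp [h]
  map_smul' c v := by
    funext j
    by_cases h : (j : ℕ) + 1 < m <;> simp [h]

/-- The inclusion `ι : N_(1) → N_(m)` with `ι(1) = T^(m-1)` (the socle generator,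
realized as the basis vector with index `0`). -/
def iota (m : ℕ) : (Fin 1 → K) →ₗ[K] (Fin m → K) where
  toFun v := fun j => if (j : ℕ) = 0 then v 0 else 0
  map_add' u v := by
    funext j
    by_cases h : (j : ℕ) = 0 <;> simp [h]
  map_smul' c v := by
    funext j
    by_cases h : (j : ℕ) = 0 <;> simp [h]

/-- The Jordan type of the nilpotent operator `φ` is the partition `lam`:
`(V, φ)` is isomorphic to `N_lam` as a `K[T]`-module. -/
def JordanType {V : Type} [AddCommGroup V] [Module K V]
    (φ : V →ₗ[K] V) (lam : ℕ → ℕ) : Prop :=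
  IsPartition lam ∧ ∃ e : V ≃ₗ[K] NMod K lam, ∀ v, e (φ v) = shiftMap K lam (e v)

/-- The Jordan type of `coker f` (with the operator induced by `φ`) is the partition `γ`:
there is a `K[T]`-epimorphism `q : V₂ → N_γ` with kernel exactly the image of `f`. -/
def CokerType {V₁ V₂ : Type} [AddCommGroup V₁] [Module K V₁]
    [AddCommGroup V₂] [Module K V₂]
    (f : V₁ →ₗ[K] V₂) (φ : V₂ →ₗ[K] V₂) (γ : ℕ → ℕ) : Prop :=
  IsPartition γ ∧ ∃ q : V₂ →ₗ[K] NMod K γ,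
    Function.Surjective q ∧ LinearMap.ker q = LinearMap.range f ∧
    q ∘ₗ φ = shiftMap K γ ∘ₗ q

/-- The space `Hom_S(X, X')` of morphisms between the triples
`X = (V₁, V₂, f)` (with operators `φ₁, φ₂`) and `X' = (W₁, W₂, g)` (with operators
`ψ₁, ψ₂`): pairs `(p₁, p₂)` of `K[T]`-homomorphisms with `g ∘ p₁ = p₂ ∘ f`. -/
def homS {V₁ V₂ W₁ W₂ : Type}
    [AddCommGroup V₁] [Module K V₁] [AddCommGroup V₂] [Module K V₂]
    [AddCommGroup W₁] [Module K W₁] [AddCommGroup W₂] [Module K W₂]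
    (φ₁ : V₁ →ₗ[K] V₁) (φ₂ : V₂ →ₗ[K] V₂) (f : V₁ →ₗ[K] V₂)
    (ψ₁ : W₁ →ₗ[K] W₁) (ψ₂ : W₂ →ₗ[K] W₂) (g : W₁ →ₗ[K] W₂) :
    Submodule K ((V₁ →ₗ[K] W₁) × (V₂ →ₗ[K] W₂)) where
  carrier := {p | p.1 ∘ₗ φ₁ = ψ₁ ∘ₗ p.1 ∧ p.2 ∘ₗ φ₂ = ψ₂ ∘ₗ p.2 ∧
    g ∘ₗ p.1 = p.2 ∘ₗ f}
  add_mem' := by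
    intro p q hp hq
    obtain ⟨h1, h2, h3⟩ := hp
    obtain ⟨k1, k2, k3⟩ := hq
    refine ⟨?_, ?_, ?_⟩
    · simp only [Prod.fst_add, LinearMap.add_comp, LinearMap.comp_add, h1, k1]
    · simp only [Prod.snd_add, LinearMap.add_comp, LinearMap.comp_add, h2, k2]
    · simp only [Prod.fst_add, Prod.snd_add, LinearMap.add_comp, LinearMap.comp_add, h3, k3]
  zero_mem' := by
    refine ⟨?_, ?_, ?_⟩ <;>
      simp only [Prod.fst_zero, Prod.snd_zero, LinearMap.zero_comp, LinearMap.comp_zero]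
  smul_mem' := by
    intro c p hp
    obtain ⟨h1, h2, h3⟩ := hp
    refine ⟨?_, ?_, ?_⟩
    · simp only [Prod.smul_fst, LinearMap.smul_comp, LinearMap.comp_smul, h1]
    · simp only [Prod.smul_snd, LinearMap.smul_comp, LinearMap.comp_smul, h2]
    · simp only [Prod.smul_fst, Prod.smul_snd, LinearMap.smul_comp, LinearMap.comp_smul, h3]

/-- `Z = (Z₁, Z₂, fZ)` is an extension of `Y = (Y₁, Y₂, fY)` by `X = (X₁, X₂, fX)`:
there is a short exact sequence `0 → X → Z → Y → 0` in `S`, i.e. morphisms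
`u : X → Z` and `p : Z → Y` whose component sequences are short exact sequences
of `K[T]`-modules. -/
def IsExt {X₁ X₂ Z₁ Z₂ Y₁ Y₂ : Type}
    [AddCommGroup X₁] [Module K X₁] [AddCommGroup X₂] [Module K X₂]
    [AddCommGroup Z₁] [Module K Z₁] [AddCommGroup Z₂] [Module K Z₂]
    [AddCommGroup Y₁] [Module K Y₁] [AddCommGroup Y₂] [Module K Y₂]
    (φX₁ : X₁ →ₗ[K] X₁) (φX₂ : X₂ →ₗ[K] X₂) (fX : X₁ →ₗ[K] X₂)
    (φZ₁ : Z₁ →ₗ[K] Z₁) (φZ₂ : Z₂ →ₗ[K] Z₂) (fZ : Z₁ →ₗ[K] Z₂)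
    (φY₁ : Y₁ →ₗ[K] Y₁) (φY₂ : Y₂ →ₗ[K] Y₂) (fY : Y₁ →ₗ[K] Y₂) : Prop :=
  ∃ (u₁ : X₁ →ₗ[K] Z₁) (u₂ : X₂ →ₗ[K] Z₂) (p₁ : Z₁ →ₗ[K] Y₁) (p₂ : Z₂ →ₗ[K] Y₂),
    u₁ ∘ₗ φX₁ = φZ₁ ∘ₗ u₁ ∧ u₂ ∘ₗ φX₂ = φZ₂ ∘ₗ u₂ ∧ fZ ∘ₗ u₁ = u₂ ∘ₗ fX ∧
    p₁ ∘ₗ φZ₁ = φY₁ ∘ₗ p₁ ∧ p₂ ∘ₗ φZ₂ = φY₂ ∘ₗ p₂ ∧ fY ∘ₗ p₁ = p₂ ∘ₗ fZ ∧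
    Function.Injective u₁ ∧ Function.Injective u₂ ∧
    Function.Surjective p₁ ∧ Function.Surjective p₂ ∧
    LinearMap.range u₁ = LinearMap.ker p₁ ∧ LinearMap.range u₂ = LinearMap.ker p₂

end LRGE

namespace LRGE

lemma psum_sub_aux (a b : ℕ → ℕ) (h : ∀ i, a i ≤ b i) (k : ℕ) :
    ∑ i ∈ Finset.range k, (b i - a i) = psum b k - psum a k ∧ psum a k ≤ psum b k := by
  induction k with
  | zero => simp [psum]
  | succ k ih =>
    have hk := h k
    unfold psum at *
    rw [Finset.sum_range_succ, Finset.sum_range_succ, Finset.sum_range_succ]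
    omega

lemma gbsum_mono (βX γY βY : ℕ → ℕ) (k : ℕ) :
    gbsum βX γY βY k ≤ gbsum βX γY βY (k + 1) := by
  unfold gbsum psum
  rw [Finset.sum_range_succ (f := βX), Finset.sum_range_succ (f := γY),
    Finset.sum_range_succ (f := fun i => βY i - γY i)]
  have : k - numParts βX ≤ k + 1 - numParts βX := Nat.sub_le_sub_right (Nat.le_succ k) _
  omega

lemma psum_geBeta (βX γY βY : ℕ → ℕ) (k : ℕ) :
    psum (geBeta βX γY βY) k = gbsum βX γY βY k := by
  induction k with
  | zero => simp [psum, gbsum]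
  | succ k ih =>
    have hm := gbsum_mono βX γY βY k
    unfold psum at *
    rw [Finset.sum_range_succ, ih, geBeta]
    omega

/-- If `Y ⊴ Y'` in the dominance order (with `|β^Y| = |β^{Y'}|` and
`|γ^Y| = |γ^{Y'}|`), then `Y*X ⊴ Y'*X`. -/
theorem gext_mono_left (γX βX γY βY γY' βY' : ℕ → ℕ)
    (hX : IsLRPair γX βX) (hY : IsLRPair γY βY) (hY' : IsLRPair γY' βY')
    (hβ : ∑ᶠ i, βY i = ∑ᶠ i, βY' i) (hγ : ∑ᶠ i, γY i = ∑ᶠ i, γY' i)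
    (hdom : domLE (γY, βY) (γY', βY')) :
    domLE (gext (γY, βY) (γX, βX)) (gext (γY', βY') (γX, βX)) := by
  intro k hk
  have hA : psum γY' k ≤ psum γY k := (hdom k hk).1
  have hB : psum βY' k ≤ psum βY k := (hdom k hk).2
  constructor
  · show psum (fun i => γX i + γY' i) k ≤ psum (fun i => γX i + γY i) k
    unfold psum at *
    rw [Finset.sum_add_distrib, Finset.sum_add_distrib]
    omega
  · show psum (geBeta βX γY' βY') k ≤ psum (geBeta βX γY βY) k
    rw [psum_geBeta, psum_geBeta]
    obtain ⟨hs, hle⟩ := psum_sub_aux γY βY (fun i => (hY.2.2 i).1) k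
    obtain ⟨hs', hle'⟩ := psum_sub_aux γY' βY' (fun i => (hY'.2.2 i).1) k
    unfold gbsum
    rw [hs, hs']
    omega

end LRGE
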